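/- Define M₀ = T, M₁ = P₁ (with (P₁)_{jk} = E_{j1}T_{jk}), M₂ = 𝟙π, using the parametrization π = ½(1−a₀,1+a₀), T = ½[[1+b−c₀,1−b+c₀],[1−b−c₀,1+b+c₀]], E = [[1−u+v₀,u−v₀],[1−u−v₀,u+v₀]]. Set a = a₀v₀, c = c₀v₀, v = v₀². Then: tr(M₀) = b+1, tr(M₁) = bu+c+u, tr(M₂) = 1, tr(M₀²) = b²+1, tr(M₁²) = b²u²+2bcu+c²+2cu+u²+2bv, tr(M₂²) = 1, tr(M₀M₁) = b²u+bc+c+u, tr(M₀M₂) = 1, tr(M₁M₂) = a+u, tr(M₀M₁M₂) = ab+c+u. -/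
import Mathlib


open Matrix

/-- `π = ½(1−a₀, 1+a₀)`. -/
noncomputable def piPar (a₀ : ℂ) : Fin 2 → ℂ := ![(1 - a₀) / 2, (1 + a₀) / 2]

/-- `T = ½[[1+b−c₀, 1−b+c₀],[1−b−c₀, 1+b+c₀]]`. -/
noncomputable def TPar (b c₀ : ℂ) : Matrix (Fin 2) (Fin 2) ℂ :=
  !![(1 + b - c₀) / 2, (1 - b + c₀) / 2; (1 - b - c₀) / 2, (1 + b + c₀) / 2]

/-- `E = [[1−u+v₀, u−v₀],[1−u−v₀, u+v₀]]`. -/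
noncomputable def EPar (u v₀ : ℂ) : Matrix (Fin 2) (Fin 2) ℂ :=
  !![1 - u + v₀, u - v₀; 1 - u - v₀, u + v₀]

/-- `M₀ = T`. -/
noncomputable def M0 (a₀ b c₀ u v₀ : ℂ) : Matrix (Fin 2) (Fin 2) ℂ := TPar b c₀

/-- `M₁ = P₁`, where `(P₁) j k = E j 1 * T j k`. -/
noncomputable def M1 (a₀ b c₀ u v₀ : ℂ) : Matrix (Fin 2) (Fin 2) ℂ :=
  Matrix.of fun j k => EPar u v₀ j 1 * TPar b c₀ j k

/-- `M₂ = 𝟙π`, the 2×2 matrix with both rows equal to `π`. -/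
noncomputable def M2 (a₀ b c₀ u v₀ : ℂ) : Matrix (Fin 2) (Fin 2) ℂ :=
  Matrix.of fun _ j => piPar a₀ j

/-- The ten Sibirskii trace generators evaluated on `(M₀, M₁, M₂)`, written in terms
of the birational parameters `a = a₀v₀`, `c = c₀v₀`, `v = v₀²`. -/
theorem trace_generators (a₀ b c₀ u v₀ a c v : ℂ)
    (ha : a = a₀ * v₀) (hc : c = c₀ * v₀) (hv : v = v₀ ^ 2) :
    Matrix.trace (M0 a₀ b c₀ u v₀) = b + 1 ∧
    Matrix.trace (M1 a₀ b c₀ u v₀) = b * u + c + u ∧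
    Matrix.trace (M2 a₀ b c₀ u v₀) = 1 ∧
    Matrix.trace (M0 a₀ b c₀ u v₀ * M0 a₀ b c₀ u v₀) = b ^ 2 + 1 ∧
    Matrix.trace (M1 a₀ b c₀ u v₀ * M1 a₀ b c₀ u v₀) =
      b ^ 2 * u ^ 2 + 2 * b * c * u + c ^ 2 + 2 * c * u + u ^ 2 + 2 * b * v ∧
    Matrix.trace (M2 a₀ b c₀ u v₀ * M2 a₀ b c₀ u v₀) = 1 ∧
    Matrix.trace (M0 a₀ b c₀ u v₀ * M1 a₀ b c₀ u v₀) = b ^ 2 * u + b * c + c + u ∧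
    Matrix.trace (M0 a₀ b c₀ u v₀ * M2 a₀ b c₀ u v₀) = 1 ∧
    Matrix.trace (M1 a₀ b c₀ u v₀ * M2 a₀ b c₀ u v₀) = a + u ∧
    Matrix.trace (M0 a₀ b c₀ u v₀ * M1 a₀ b c₀ u v₀ * M2 a₀ b c₀ u v₀) =
      a * b + c + u := by
  subst ha hc hv
  refine ⟨?_, ?_, ?_, ?_, ?_, ?_, ?_, ?_, ?_, ?_⟩ <;>
    simp [M0, M1, M2, TPar, EPar, piPar, Matrix.trace, Matrix.mul_apply,
      Fin.sum_univ_two, Matrix.diag, Matrix.vecHead, Matrix.vecTail] <;> ring
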